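/- The creation and annihilation operators a_i^± (i = 1,…,m+n) satisfy the triple relations: (i) ⟦a_i^ξ, a_j^ξ⟧ = 0 for ξ = ± and all i,j; (ii) ⟦⟦a_i^+, a_j^-⟧, a_k^+⟧ = δ_{jk} a_i^+ + (−1)^{d_i·d_i} δ_{ij} a_k^+ for all i,j,k; (iii) ⟦⟦a_i^+, a_j^-⟧, a_k^-⟧ = −(−1)^{(d_i+d_j)·d_k} δ_{ik} a_j^- − (−1)^{d_i·d_i} δ_{ij} a_k^- for all i,j,k ∈ {1,…,m+n}. -/

import Mathlib

/-- Degrees in `ℤ₂ × ℤ₂`. -/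
abbrev Deg := ZMod 2 × ZMod 2

/-- The dot product `a·b = a₁b₁ + a₂b₂ ∈ ℤ₂`. -/
def dot (a b : Deg) : ZMod 2 := a.1 * b.1 + a.2 * b.2

/-- The sign `(−1)^{a·b}`. -/
noncomputable def sgn (a b : Deg) : ℂ := (-1 : ℂ) ^ (dot a b).val

/-- `(m+n+1) × (m+n+1)` complex matrices, `m = m₁+m₂`, `n = n₁+n₂`. -/
abbrev Mat (m₁ m₂ n₁ n₂ : ℕ) := Matrix (Fin (m₁+m₂+n₁+n₂+1)) (Fin (m₁+m₂+n₁+n₂+1)) ℂ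

/-- The degree `d_i` of a row/column index. -/
def d {m₁ m₂ n₁ n₂ : ℕ} (i : Fin (m₁+m₂+n₁+n₂+1)) : Deg :=
  if i.val ≤ m₁ then (0, 0)
  else if i.val ≤ m₁ + m₂ then (1, 1)
  else if i.val ≤ m₁ + m₂ + n₁ then (1, 0)
  else (0, 1)

/-- A matrix is homogeneous of degree `a` if `M i j = 0` whenever `d i + d j ≠ a`. -/
def IsHomog {m₁ m₂ n₁ n₂ : ℕ} (a : Deg) (M : Mat m₁ m₂ n₁ n₂) : Prop :=
  ∀ i j, d i + d j ≠ a → M i j = 0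

/-- The bracket `⟦M,N⟧ = MN − (−1)^{a·b} NM` of homogeneous matrices of degrees `a`, `b`. -/
noncomputable def bb {m₁ m₂ n₁ n₂ : ℕ} (a b : Deg) (M N : Mat m₁ m₂ n₁ n₂) : Mat m₁ m₂ n₁ n₂ :=
  M * N - sgn a b • (N * M)

/-- The graded supertrace. -/
noncomputable def Str {m₁ m₂ n₁ n₂ : ℕ} (M : Mat m₁ m₂ n₁ n₂) : ℂ :=
  ∑ i, if i.val ≤ m₁ + m₂ then M i i else - M i i

/-- The matrix unit `e_{ij}`. -/
noncomputable def e {m₁ m₂ n₁ n₂ : ℕ} (i j : Fin (m₁+m₂+n₁+n₂+1)) : Mat m₁ m₂ n₁ n₂ :=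
  Matrix.single i j 1


/-! Everything reduces to `e_{ij} e_{kl} = δ_{jk} e_{il}`. The inner bracket is
`⟦a_i^+, a_j^-⟧ = e_{ij} − δ_{ij} (−1)^{d_i·d_j} e_{00}`; when `i = j` the outer sign
`(−1)^{(d_i+d_j)·d_k}` is `1` because `d_i + d_i = 0` in `ℤ₂ × ℤ₂`. -/

section MatrixUnits

variable {m₁ m₂ n₁ n₂ : ℕ}

theorem e_mul_e (i j k l : Fin (m₁+m₂+n₁+n₂+1)) :
    (e i j : Mat m₁ m₂ n₁ n₂) * e k l = if j = k then e i l else 0 := by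
  split_ifs with h
  · subst h
    simp [e]
  · simp [e, h]

theorem bb_e_e (a b : Deg) (i j k l : Fin (m₁+m₂+n₁+n₂+1)) :
    bb a b (e i j : Mat m₁ m₂ n₁ n₂) (e k l) =
      (if j = k then e i l else 0) - sgn a b • (if l = i then e k j else 0) := by
  rw [bb, e_mul_e, e_mul_e]

theorem bb_e_sub_smul_e00_create (c b : Deg) (t : ℂ) {i k : Fin (m₁+m₂+n₁+n₂+1)}
    (hi : i ≠ 0) (hk : k ≠ 0) (j : Fin (m₁+m₂+n₁+n₂+1)) :
    bb c b (e i j - t • e 0 0 : Mat m₁ m₂ n₁ n₂) (e k 0) =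
      (if j = k then (1 : ℂ) else 0) • e i 0 + (sgn c b * t) • e k 0 := by
  simp [bb, sub_mul, mul_sub, e_mul_e, hi.symm, hk.symm, smul_smul]

theorem bb_e_sub_smul_e00_annihilate (c b : Deg) (t : ℂ) {j k : Fin (m₁+m₂+n₁+n₂+1)}
    (hj : j ≠ 0) (hk : k ≠ 0) (i : Fin (m₁+m₂+n₁+n₂+1)) :
    bb c b (e i j - t • e 0 0 : Mat m₁ m₂ n₁ n₂) (e 0 k) =
      -(sgn c b • (if i = k then (1 : ℂ) else 0) • e 0 j) - t • e 0 k := by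
  simp only [bb, sub_mul, mul_sub, e_mul_e, hj, hk, eq_comm (a := k), if_false, smul_zero,
    sub_zero, zero_sub, Algebra.smul_mul_assoc, Algebra.mul_smul_comm, smul_ite, ite_smul,
    one_smul, zero_smul]
  split_ifs <;> abel

theorem bb_create_annihilate (a b : Deg) (i j : Fin (m₁+m₂+n₁+n₂+1)) :
    bb a b (e i 0 : Mat m₁ m₂ n₁ n₂) (e 0 j) = e i j - (if i = j then sgn a b else 0) • e 0 0 := by
  simp [bb_e_e, eq_comm (a := j)]

end MatrixUnits

theorem sgn_add_self_left (a b : Deg) : sgn (a + a) b = 1 := by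
  simp [sgn, dot, CharTwo.add_self_eq_zero]

theorem triple_relations (m₁ m₂ n₁ n₂ : ℕ)
    (i j k : Fin (m₁+m₂+n₁+n₂+1)) (hi : i ≠ 0) (hj : j ≠ 0) (hk : k ≠ 0) :
    (bb (d i) (d j) (e i 0) (e j 0) = (0 : Mat m₁ m₂ n₁ n₂) ∧
     bb (d i) (d j) (e 0 i) (e 0 j) = (0 : Mat m₁ m₂ n₁ n₂)) ∧
    bb (d i + d j) (d k) (bb (d i) (d j) (e i 0) (e 0 j)) (e k 0) =
      (if j = k then (1 : ℂ) else 0) • e i 0 +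
        sgn (d i) (d i) • ((if i = j then (1 : ℂ) else 0) • (e k 0 : Mat m₁ m₂ n₁ n₂)) ∧
    bb (d i + d j) (d k) (bb (d i) (d j) (e i 0) (e 0 j)) (e 0 k) =
      -(sgn (d i + d j) (d k) • ((if i = k then (1 : ℂ) else 0) • e 0 j)) -
        sgn (d i) (d i) • ((if i = j then (1 : ℂ) else 0) • (e 0 k : Mat m₁ m₂ n₁ n₂)) := by
  refine ⟨⟨?_, ?_⟩, ?_, ?_⟩
  · simp [bb_e_e, hi.symm, hj.symm]
  · simp [bb_e_e, hi, hj]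
  · rw [bb_create_annihilate, bb_e_sub_smul_e00_create _ _ _ hi hk]
    by_cases hij : i = j
    · subst hij
      simp [sgn_add_self_left]
    · simp [hij]
  · rw [bb_create_annihilate, bb_e_sub_smul_e00_annihilate _ _ _ hj hk]
    by_cases hij : i = j
    · subst hij
      simp [sgn_add_self_left]
    · simp [hij]
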